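/- arXiv:1912.10515 — 5 statements merged into one kernel-verified Lean document; each statement's English description precedes it below -/
import Mathlib

section
/- For every priority graph G = (Φ, ≺), the relation ≤_G induced by G on valuations is reflexive and transitive; consequently, for any set W of valuations, the pair (W, ≤_G restricted to W) is a conditionally-grounded preference model. -/
open Classical

/-- A valuation (possible world) over the set `P` of propositional atoms. -/
abbrev Val (P : Type*) := P → Bool

/-- A priority graph: a finite set `Φ` of formulas (identified with the sets of
valuations satisfying them) together with a strict partial order `prec` on `Φ`. -/
structure PGraph (P : Type*) where
  Φ : Set (Set (Val P))
  finite : Φ.Finite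
  prec : Set (Val P) → Set (Val P) → Prop
  irrefl : ∀ φ ∈ Φ, ¬ prec φ φ
  trans : ∀ φ ∈ Φ, ∀ ψ ∈ Φ, ∀ χ ∈ Φ, prec φ ψ → prec ψ χ → prec φ χ

/-- The preference relation induced by a priority graph on valuations:
`w ≤_G w'` iff for every `φ ∈ Φ`, either (`w' ∈ φ` implies `w ∈ φ`) or there is
`ψ ∈ Φ` with `ψ ≺ φ`, `w ∈ ψ` and `w' ∉ ψ`. -/
def PGraph.le {P : Type*} (G : PGraph P) (w w' : Val P) : Prop :=
  ∀ φ ∈ G.Φ, (w' ∈ φ → w ∈ φ) ∨ ∃ ψ ∈ G.Φ, G.prec ψ φ ∧ w ∈ ψ ∧ w' ∉ ψ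

/-- A conditionally-grounded preference model: a set `W` of valuations with a
reflexive and transitive relation on `W`. -/
structure PrefModel (P : Type*) where
  W : Set (Val P)
  le : Val P → Val P → Prop
  refl : ∀ w ∈ W, le w w
  trans : ∀ w ∈ W, ∀ w' ∈ W, ∀ w'' ∈ W, le w w' → le w' w'' → le w w''

/-- `M` is induced by the priority graph `G`: on the worlds of `M`, the relation of
`M` coincides with the relation induced by `G`. -/
def InducedBy {P : Type*} (M : PrefModel P) (G : PGraph P) : Prop :=
  ∀ w ∈ M.W, ∀ w' ∈ M.W, (M.le w w' ↔ G.le w w')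

/-- the relation induced by a priority graph is reflexive and transitive;
consequently, for every set `W` of valuations, `(W, ≤_G ↾ W)` is a
conditionally-grounded preference model. -/
theorem pgraph_le_refl_trans_and_model {P : Type*} [Fintype P] (G : PGraph P) :
    Reflexive G.le ∧ Transitive G.le ∧
      ∀ W : Set (Val P), ∃ M : PrefModel P, M.W = W ∧ M.le = G.le := by
  -- auxiliary strict relation, globally a strict order
  set r : Set (Val P) → Set (Val P) → Prop :=
    fun a b => a ∈ G.Φ ∧ b ∈ G.Φ ∧ G.prec a b with hr
  haveI : IsStrictOrder (Set (Val P)) r :=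
    { irrefl := fun a h => G.irrefl a h.1 h.2.2
      trans := fun a b c h1 h2 =>
        ⟨h1.1, h2.2.1, G.trans _ h1.1 _ h1.2.1 _ h2.2.1 h1.2.2 h2.2.2⟩ }
  have hwf : G.Φ.WellFoundedOn r := G.finite.wellFoundedOn
  have key : ∀ w w' w'' : Val P, G.le w w' → G.le w' w'' →
      ∀ ψ ∈ G.Φ, w ∈ ψ → w' ∉ ψ →
        ∃ χ ∈ G.Φ, (χ = ψ ∨ G.prec χ ψ) ∧ w ∈ χ ∧ w'' ∉ χ := by
    intro w w' w'' h1 h2 ψ hψ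
    refine Set.WellFoundedOn.induction hwf hψ
      (P := fun x => w ∈ x → w' ∉ x → ∃ χ ∈ G.Φ, (χ = x ∨ G.prec χ x) ∧ w ∈ χ ∧ w'' ∉ χ) ?_
    · intro y hy IH hwy hw'y
      by_cases hw'' : w'' ∈ y
      · rcases h2 y hy with h | ⟨χ, hχ, hpχ, hw'χ, hw''χ⟩
        · exact absurd (h hw'') hw'y
        · rcases h1 χ hχ with h | ⟨δ, hδ, hpδ, hwδ, hw'δ⟩
          · exact ⟨χ, hχ, Or.inr hpχ, h hw'χ, hw''χ⟩
          · obtain ⟨χ', hχ', hcase, hwχ', hw''χ'⟩ :=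
              IH δ hδ ⟨hδ, hy, G.trans _ hδ _ hχ _ hy hpδ hpχ⟩ hwδ hw'δ
            refine ⟨χ', hχ', Or.inr ?_, hwχ', hw''χ'⟩
            rcases hcase with rfl | hpp
            · exact G.trans _ hχ' _ hχ _ hy hpδ hpχ
            · exact G.trans _ hχ' _ hδ _ hy hpp
                (G.trans _ hδ _ hχ _ hy hpδ hpχ)
      · exact ⟨y, hy, Or.inl rfl, hwy, hw''⟩
  have hrefl : Reflexive G.le := fun w φ _ => Or.inl id
  have htrans : Transitive G.le := by
    intro w w' w'' h1 h2 φ hφ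
    rcases h1 φ hφ with ha | ⟨ψ1, hψ1, hp1, hw1, hw'1⟩
    · rcases h2 φ hφ with hb | ⟨ψ2, hψ2, hp2, hw'2, hw''2⟩
      · exact Or.inl fun h => ha (hb h)
      · rcases h1 ψ2 hψ2 with hc | ⟨δ, hδ, hpδ, hwδ, hw'δ⟩
        · exact Or.inr ⟨ψ2, hψ2, hp2, hc hw'2, hw''2⟩
        · obtain ⟨χ, hχ, hcase, hwχ, hw''χ⟩ := key w w' w'' h1 h2 δ hδ hwδ hw'δ
          refine Or.inr ⟨χ, hχ, ?_, hwχ, hw''χ⟩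
          rcases hcase with rfl | hpp
          · exact G.trans _ hχ _ hψ2 _ hφ hpδ hp2
          · exact G.trans _ hχ _ hδ _ hφ hpp (G.trans _ hδ _ hψ2 _ hφ hpδ hp2)
    · obtain ⟨χ, hχ, hcase, hwχ, hw''χ⟩ := key w w' w'' h1 h2 ψ1 hψ1 hw1 hw'1
      refine Or.inr ⟨χ, hχ, ?_, hwχ, hw''χ⟩
      rcases hcase with rfl | hpp
      · exact hp1
      · exact G.trans _ hχ _ hψ1 _ hφ hpp hp1
  refine ⟨hrefl, htrans, fun W => ⟨⟨W, G.le, fun w _ => hrefl w,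
    fun w _ w' _ w'' _ h1 h2 => htrans h1 h2⟩, rfl, rfl⟩⟩
end

section
/- Every conditionally-grounded preference model M = (W, ≤) is induced by some priority graph G = (Φ, ≺), i.e., there exist a finite set Φ of formulas and a strict partial order ≺ on Φ such that for all w, w' ∈ W: w ≤ w' iff w ≤_G w'. -/
open Classical

/-- every conditionally-grounded preference model is induced by some
priority graph. -/
theorem every_pref_model_induced_by_some_pgraph {P : Type*} [Fintype P]
    (M : PrefModel P) : ∃ G : PGraph P, InducedBy M G := by
  classical
  refine ⟨⟨{S | ∃ v ∈ M.W, S = {u | M.le u v}}, Set.toFinite _, fun _ _ => False,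
    by simp, by simp⟩, ?_⟩
  intro w hw w' hw'
  constructor
  · intro h φ hφ
    obtain ⟨v, hv, rfl⟩ := hφ
    exact Or.inl fun hw'v => M.trans w hw w' hw' v hv h hw'v
  · intro h
    rcases h {u | M.le u w'} ⟨w', hw', rfl⟩ with h1 | ⟨_, _, hf, _⟩
    · exact h1 (M.refl w' hw')
    · exact hf.elim
end

section
/- Let M = (W, ≤) be a conditionally-grounded preference model. For w ∈ W define its cluster [w] = {w' ∈ W : w' ≤ w and w ≤ w'}, regarded as a formula (a set of valuations). Let Φ_M = {[w] : w ∈ W} and define ≺_M on Φ_M by: C ≺_M C' iff there exist v ∈ C and v' ∈ C' with v ≤ v' and not v' ≤ v. Then ≺_M is a strict partial order on the finite set Φ_M (so G_M = (Φ_M, ≺_M) is a priority graph), and G_M induces M; moreover every world of W belongs to exactly one formula of Φ_M, and for all w, w' ∈ W: w ≤ w' iff [w] = [w'] or [w] ≺_M [w']. -/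
open Classical

/-- The cluster of a world `w` in a preference model `M`, regarded as a formula. -/
def cluster {P : Type*} (M : PrefModel P) (w : Val P) : Set (Val P) :=
  {w' ∈ M.W | M.le w' w ∧ M.le w w'}

/-- The set `Φ_M` of characteristic formulas of the clusters of `M`. -/
def PhiM {P : Type*} (M : PrefModel P) : Set (Set (Val P)) :=
  {C | ∃ w ∈ M.W, C = cluster M w}

/-- The order `≺_M` on clusters: `C ≺_M C'` iff some `v ∈ C` and `v' ∈ C'` satisfy
`v ≤ v'` and not `v' ≤ v`. -/
def precM {P : Type*} (M : PrefModel P) (C C' : Set (Val P)) : Prop :=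
  ∃ v ∈ C, ∃ v' ∈ C', M.le v v' ∧ ¬ M.le v' v

section Aux
variable {P : Type*} (M : PrefModel P)

lemma mem_cluster {v w : Val P} : v ∈ cluster M w ↔ v ∈ M.W ∧ M.le v w ∧ M.le w v :=
  Iff.rfl

lemma self_mem_cluster {w : Val P} (hw : w ∈ M.W) : w ∈ cluster M w :=
  ⟨hw, M.refl w hw, M.refl w hw⟩

lemma cluster_eq {u w : Val P} (hu : u ∈ M.W) (hw : w ∈ M.W)
    (h1 : M.le u w) (h2 : M.le w u) : cluster M u = cluster M w := by
  ext v
  constructor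
  · rintro ⟨hv, hvu, huv⟩
    exact ⟨hv, M.trans v hv u hu w hw hvu h1, M.trans w hw u hu v hv h2 huv⟩
  · rintro ⟨hv, hvw, hwv⟩
    exact ⟨hv, M.trans v hv w hw u hu hvw h2, M.trans u hu w hw v hv h1 hwv⟩

lemma precM_cluster_iff {u u' : Val P} (hu : u ∈ M.W) (hu' : u' ∈ M.W) :
    precM M (cluster M u) (cluster M u') ↔ M.le u u' ∧ ¬ M.le u' u := by
  constructor
  · rintro ⟨v, ⟨hv, hvu, huv⟩, v', ⟨hv', hv'u', hu'v'⟩, h1, h2⟩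
    constructor
    · exact M.trans u hu v hv u' hu' huv
        (M.trans v hv v' hv' u' hu' h1 hv'u')
    · intro h
      exact h2 (M.trans v' hv' u' hu' v hv hv'u'
        (M.trans u' hu' u hu v hv h huv))
  · rintro ⟨h1, h2⟩
    exact ⟨u, self_mem_cluster M hu, u', self_mem_cluster M hu', h1, h2⟩

end Aux

/-- `G_M = (Φ_M, ≺_M)` is a priority graph (so `≺_M` is a strict partial
order on the finite set `Φ_M`) inducing `M`; every world of `W` belongs to exactly one
formula of `Φ_M`; and `w ≤ w'` iff `[w] = [w']` or `[w] ≺_M [w']`. -/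
theorem canonical_pgraph_induces {P : Type*} [Fintype P] (M : PrefModel P) :
    ∃ G : PGraph P, G.Φ = PhiM M ∧ G.prec = precM M ∧ InducedBy M G ∧
      (∀ w ∈ M.W, ∃! C, C ∈ PhiM M ∧ w ∈ C) ∧
      (∀ w ∈ M.W, ∀ w' ∈ M.W,
        (M.le w w' ↔ cluster M w = cluster M w' ∨ precM M (cluster M w) (cluster M w'))) := by
  refine ⟨⟨PhiM M, Set.toFinite _, precM M, ?_, ?_⟩, rfl, rfl, ?_, ?_, ?_⟩
  · rintro φ ⟨w, hw, rfl⟩ hp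
    rcases (precM_cluster_iff M hw hw).1 hp with ⟨h1, h2⟩
    exact h2 h1
  · rintro φ ⟨a, ha, rfl⟩ ψ ⟨b, hb, rfl⟩ χ ⟨c, hc, rfl⟩ h1 h2
    rcases (precM_cluster_iff M ha hb).1 h1 with ⟨hab, hnba⟩
    rcases (precM_cluster_iff M hb hc).1 h2 with ⟨hbc, hncb⟩
    refine (precM_cluster_iff M ha hc).2 ⟨M.trans a ha b hb c hc hab hbc, fun hca => ?_⟩
    exact hncb (M.trans c hc a ha b hb hca hab)
  · -- InducedBy
    intro w hw w' hw'
    constructor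
    · intro hle φ hφ
      rcases hφ with ⟨u, hu, rfl⟩
      by_cases hba : M.le w' w
      · left
        rintro ⟨hw'W, hw'u, huw'⟩
        exact ⟨hw, M.trans w hw w' hw' u hu hle hw'u,
          M.trans u hu w' hw' w hw huw' hba⟩
      · by_cases hmem : w' ∈ cluster M u
        · right
          refine ⟨cluster M w, ⟨w, hw, rfl⟩, ⟨w, self_mem_cluster M hw, w', hmem, hle, hba⟩,
            self_mem_cluster M hw, ?_⟩
          rintro ⟨_, hw'w, _⟩
          exact hba hw'w
        · left; intro h; exact absurd h hmem
    · intro hG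
      rcases hG (cluster M w') ⟨w', hw', rfl⟩ with h | ⟨ψ, ⟨u, hu, rfl⟩, hprec, hwψ, hw'ψ⟩
      · exact (h (self_mem_cluster M hw')).2.1
      · rcases hprec with ⟨v, ⟨hvW, hvu, huv⟩, v', ⟨hv'W, hv'w', _⟩, h1, _⟩
        rcases hwψ with ⟨_, hwu, _⟩
        have hwv : M.le w v := M.trans w hw u hu v hvW hwu huv
        have : M.le w v' := M.trans w hw v hvW v' hv'W hwv h1
        exact M.trans w hw v' hv'W w' hw' this hv'w'
  · -- unique cluster
    intro w hw
    refine ⟨cluster M w, ⟨⟨w, hw, rfl⟩, self_mem_cluster M hw⟩, ?_⟩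
    rintro C ⟨⟨u, hu, rfl⟩, hwC⟩
    rcases hwC with ⟨_, hwu, huw⟩
    exact cluster_eq M hu hw huw hwu
  · -- characterization
    intro w hw w' hw'
    constructor
    · intro hle
      by_cases hba : M.le w' w
      · exact Or.inl (cluster_eq M hw hw' hle hba)
      · exact Or.inr ((precM_cluster_iff M hw hw').2 ⟨hle, hba⟩)
    · rintro (heq | hp)
      · have : w ∈ cluster M w' := heq ▸ self_mem_cluster M hw
        exact this.2.1
      · exact ((precM_cluster_iff M hw hw').1 hp).1
end

section
/- Let † be a P-graph transformation. The following are equivalent: (1) † is relevant, i.e., some dynamic operator is induced by †; (2) † preserves ψ-equivalence, i.e., for all P-graphs G1, G2 and all formulas φ and ψ, if G1 ≡_ψ G2 then †(G1, φ) ≡_ψ †(G2, φ). -/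
open Classical

/-- A dynamic operator: maps a preference model and a formula to a preference model
with the same set of worlds. -/
structure DynOp (P : Type*) where
  act : PrefModel P → Set (Val P) → PrefModel P
  sameW : ∀ M φ, (act M φ).W = M.W

/-- The dynamic operator `star` is induced by the P-graph transformation `dag`. -/
def OpInducedBy {P : Type*} (star : DynOp P)
    (dag : PGraph P → Set (Val P) → PGraph P) : Prop :=
  ∀ (M : PrefModel P) (G : PGraph P) (φ : Set (Val P)),
    InducedBy M G → InducedBy (star.act M φ) (dag G φ)

/-- A P-graph transformation is relevant if some dynamic operator is induced by it. -/
def Relevant {P : Type*} (dag : PGraph P → Set (Val P) → PGraph P) : Prop :=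
  ∃ star : DynOp P, OpInducedBy star dag

/-- `ψ`-equivalence of P-graphs: they induce the same preference models whose set of
worlds is contained in `ψ`. -/
def EquivOn {P : Type*} (ψ : Set (Val P)) (G₁ G₂ : PGraph P) : Prop :=
  ∀ M : PrefModel P, M.W ⊆ ψ → (InducedBy M G₁ ↔ InducedBy M G₂)


/-- Every nonempty finite set has a minimal element for a transitive
irreflexive relation. -/
lemma exists_min_of_finite {α : Type*} (r : α → α → Prop) (htr : Transitive r)
    (hirr : Irreflexive r) {s : Set α} (hs : s.Finite) (hne : s.Nonempty) :
    ∃ a ∈ s, ∀ b ∈ s, ¬ r b a := by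
  haveI := hs.to_subtype
  haveI : IsTrans s (fun a b : s => r a b) := ⟨fun a b c hab hbc => htr hab hbc⟩
  haveI : IsIrrefl s (fun a b : s => r a b) := ⟨fun a ha => hirr a ha⟩
  have hwf : WellFounded (fun a b : s => r a b) :=
    Finite.wellFounded_of_trans_of_irrefl _
  obtain ⟨a, -, ha⟩ := hwf.has_min Set.univ ⟨⟨hne.choose, hne.choose_spec⟩, trivial⟩
  exact ⟨a, a.2, fun b hb hr => ha ⟨b, hb⟩ trivial hr⟩

/-- The relation induced by a priority graph is transitive. -/
lemma PGraph.le_trans' {P : Type*} (G : PGraph P) {x y z : Val P}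
    (hxy : G.le x y) (hyz : G.le y z) : G.le x z := by
  intro φ hφ
  by_cases hφxz : z ∈ φ → x ∈ φ
  · exact Or.inl hφxz
  right
  set r : Set (Val P) → Set (Val P) → Prop :=
    fun a b => G.prec a b ∧ a ∈ G.Φ ∧ b ∈ G.Φ with hr
  have htr : Transitive r := by
    rintro a b c ⟨h1, ha, hb⟩ ⟨h2, -, hc⟩
    exact ⟨G.trans a ha b hb c hc h1 h2, ha, hc⟩
  have hirr : Irreflexive r := by
    rintro a ⟨h1, ha, -⟩; exact G.irrefl a ha h1
  set C : Set (Set (Val P)) :=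
    {χ | χ ∈ G.Φ ∧ (χ = φ ∨ G.prec χ φ) ∧
      (¬(y ∈ χ → x ∈ χ) ∨ ¬(z ∈ χ → y ∈ χ) ∨ ¬(z ∈ χ → x ∈ χ))} with hCdef
  have hCfin : C.Finite := G.finite.subset (fun χ hχ => hχ.1)
  have hCne : C.Nonempty := ⟨φ, hφ, Or.inl rfl, Or.inr (Or.inr hφxz)⟩
  obtain ⟨χ₀, hχ₀, hmin⟩ := exists_min_of_finite r htr hirr hCfin hCne
  obtain ⟨hχ₀Φ, hχ₀φ, hd⟩ := hχ₀
  have hto : ∀ ψ ∈ G.Φ, G.prec ψ χ₀ → G.prec ψ φ := by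
    intro ψ hψΦ hp
    rcases hχ₀φ with h | h
    · exact h ▸ hp
    · exact G.trans ψ hψΦ χ₀ hχ₀Φ φ hφ hp h
  have key : ∀ ψ ∈ G.Φ, G.prec ψ χ₀ →
      (y ∈ ψ → x ∈ ψ) ∧ (z ∈ ψ → y ∈ ψ) ∧ (z ∈ ψ → x ∈ ψ) := by
    intro ψ hψΦ hpψ
    by_contra hcon
    apply hmin ψ ?_ ⟨hpψ, hψΦ, hχ₀Φ⟩
    refine ⟨hψΦ, Or.inr (hto ψ hψΦ hpψ), ?_⟩
    tauto
  by_cases h1 : y ∈ χ₀ → x ∈ χ₀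
  · by_cases h2 : z ∈ χ₀ → y ∈ χ₀
    · have h3 : ¬(z ∈ χ₀ → x ∈ χ₀) := by tauto
      exact (h3 (fun hz => h1 (h2 hz))).elim
    · rcases hyz χ₀ hχ₀Φ with h | ⟨ψ, hψΦ, hp, hyψ, hzψ⟩
      · exact (h2 h).elim
      · exact ⟨ψ, hψΦ, hto ψ hψΦ hp, (key ψ hψΦ hp).1 hyψ, hzψ⟩
  · rcases hxy χ₀ hχ₀Φ with h | ⟨ψ, hψΦ, hp, hxψ, hyψ⟩
    · exact (h1 h).elim
    · exact ⟨ψ, hψΦ, hto ψ hψΦ hp, hxψ, fun hz => hyψ ((key ψ hψΦ hp).2.1 hz)⟩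

/-- The canonical preference model on a set of worlds whose relation is that
induced by a graph. -/
def modelOf {P : Type*} (G : PGraph P) (W : Set (Val P)) : PrefModel P where
  W := W
  le := G.le
  refl := fun w _ φ _ => Or.inl id
  trans := fun _ _ _ _ _ _ h1 h2 => G.le_trans' h1 h2

lemma modelOf_induced {P : Type*} (G : PGraph P) (W : Set (Val P)) :
    InducedBy (modelOf G W) G := fun _ _ _ _ => Iff.rfl

/-- Two graphs inducing the same model agree on all submodels of it. -/
lemma inducedBy_congr {P : Type*} {M M' : PrefModel P} {G₁ G₂ : PGraph P}
    (h1 : InducedBy M G₁) (h2 : InducedBy M G₂) (hW : M'.W ⊆ M.W)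
    (h : InducedBy M' G₁) : InducedBy M' G₂ := by
  intro w hw w' hw'
  rw [h w hw w' hw', ← h1 w (hW hw) w' (hW hw'), h2 w (hW hw) w' (hW hw')]

/-- The canonical dynamic operator associated with a graph transformation. -/
noncomputable def starOf {P : Type*} (dag : PGraph P → Set (Val P) → PGraph P) :
    DynOp P where
  act M φ := if h : ∃ G, InducedBy M G then modelOf (dag h.choose φ) M.W else M
  sameW M φ := by
    by_cases h : ∃ G, InducedBy M G <;> simp [h, modelOf]

/-- a P-graph transformation is relevant iff it preserves
`ψ`-equivalence. -/
theorem relevant_iff_preserves_equiv {P : Type*} [Fintype P]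
    (dag : PGraph P → Set (Val P) → PGraph P) :
    Relevant dag ↔
      ∀ (G₁ G₂ : PGraph P) (φ ψ : Set (Val P)),
        EquivOn ψ G₁ G₂ → EquivOn ψ (dag G₁ φ) (dag G₂ φ) := by
  constructor
  · rintro ⟨star, hstar⟩ G₁ G₂ φ ψ hEq M hMW
    set N := modelOf G₁ M.W with hN
    have hN1 : InducedBy N G₁ := modelOf_induced _ _
    have hN2 : InducedBy N G₂ := (hEq N hMW).1 hN1
    have hs1 := hstar N G₁ φ hN1
    have hs2 := hstar N G₂ φ hN2
    have hW : (star.act N φ).W = M.W := star.sameW N φ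
    have hle : ∀ w ∈ M.W, ∀ w' ∈ M.W,
        ((dag G₁ φ).le w w' ↔ (dag G₂ φ).le w w') := by
      intro w hw w' hw'
      have hw0 : w ∈ (star.act N φ).W := by rw [hW]; exact hw
      have hw0' : w' ∈ (star.act N φ).W := by rw [hW]; exact hw'
      exact (hs1 w hw0 w' hw0').symm.trans (hs2 w hw0 w' hw0')
    constructor
    · intro hM w hw w' hw'
      rw [hM w hw w' hw']; exact hle w hw w' hw'
    · intro hM w hw w' hw'
      rw [hM w hw w' hw']; exact (hle w hw w' hw').symm
  · intro H
    refine ⟨starOf dag, ?_⟩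
    intro M G φ hMG
    have h : ∃ G', InducedBy M G' := ⟨G, hMG⟩
    have hact : (starOf dag).act M φ = modelOf (dag h.choose φ) M.W := by
      simp only [starOf, dif_pos h]
    rw [hact]
    have hEq : EquivOn M.W h.choose G := by
      intro M' hM'W
      exact ⟨fun hi => inducedBy_congr h.choose_spec hMG hM'W hi,
             fun hi => inducedBy_congr hMG h.choose_spec hM'W hi⟩
    exact (H h.choose G φ M.W hEq (modelOf (dag h.choose φ) M.W)
      (fun _ hw => hw)).1 (modelOf_induced _ _)
end

section
/- Let G1 and G2 be priority graphs and φ a formula. Then G1 ≡_φ G2 if and only if there exists a conditionally-grounded preference model M = (W, ≤) whose set of worlds W is exactly the set of all valuations satisfying φ, such that M is induced by both G1 and G2. -/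
open Classical

lemma PGraph.le_refl' {P : Type*} (G : PGraph P) (w : Val P) : G.le w w := by
  intro φ _; exact Or.inl id

lemma PGraph.le_trans'_s5 {P : Type*} (G : PGraph P) {w w' w'' : Val P}
    (h1 : G.le w w') (h2 : G.le w' w'') : G.le w w'' := by
  intro φ hφ
  by_contra hc
  push_neg at hc
  obtain ⟨hiw, H⟩ := hc
  obtain ⟨hw''φ, hwφ⟩ : w'' ∈ φ ∧ w ∉ φ := hiw
  -- H : ∀ ψ ∈ G.Φ, G.prec ψ φ → w ∈ ψ → w'' ∈ ψ
  set Bad : Set (Val P) → Prop := fun χ =>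
    χ ∈ G.Φ ∧ (χ = φ ∨ G.prec χ φ) ∧ ((w' ∈ χ ∧ w ∉ χ) ∨ (w'' ∈ χ ∧ w' ∉ χ)) with hBad
  have precφ : ∀ χ, χ ∈ G.Φ → (χ = φ ∨ G.prec χ φ) → ∀ ψ, ψ ∈ G.Φ → G.prec ψ χ →
      G.prec ψ φ := by
    rintro χ hχ (rfl | hp) ψ hψ hpc
    · exact hpc
    · exact G.trans ψ hψ χ hχ φ hφ hpc hp
  have step : ∀ χ, Bad χ → ∃ χ', Bad χ' ∧ G.prec χ' χ := by
    rintro χ ⟨hχΦ, hord, hcase | hcase⟩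
    · -- w' ∈ χ, w ∉ χ : use h1
      rcases h1 χ hχΦ with himp | ⟨ψ, hψΦ, hpc, hwψ, hw'ψ⟩
      · exact absurd (himp hcase.1) hcase.2
      · have hpφ := precφ χ hχΦ hord ψ hψΦ hpc
        have hw''ψ : w'' ∈ ψ := H ψ hψΦ hpφ hwψ
        exact ⟨ψ, ⟨hψΦ, Or.inr hpφ, Or.inr ⟨hw''ψ, hw'ψ⟩⟩, hpc⟩
    · -- w'' ∈ χ, w' ∉ χ : use h2
      rcases h2 χ hχΦ with himp | ⟨ψ, hψΦ, hpc, hw'ψ, hw''ψ⟩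
      · exact absurd (himp hcase.1) hcase.2
      · have hpφ := precφ χ hχΦ hord ψ hψΦ hpc
        have hwψ : w ∉ ψ := fun hw => hw''ψ (H ψ hψΦ hpφ hw)
        exact ⟨ψ, ⟨hψΦ, Or.inr hpφ, Or.inl ⟨hw'ψ, hwψ⟩⟩, hpc⟩
  have start : ∃ χ, Bad χ := by
    rcases h2 φ hφ with himp | ⟨ψ, hψΦ, hpc, hw'ψ, hw''ψ⟩
    · exact ⟨φ, hφ, Or.inl rfl, Or.inl ⟨himp hw''φ, hwφ⟩⟩
    · have hwψ : w ∉ ψ := fun hw => hw''ψ (H ψ hψΦ hpc hw)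
      exact ⟨ψ, hψΦ, Or.inr hpc, Or.inl ⟨hw'ψ, hwψ⟩⟩
  obtain ⟨χ₀, hχ₀⟩ := start
  -- build an infinite descending chain
  let g : ℕ → {χ : Set (Val P) // Bad χ} := fun n =>
    Nat.rec ⟨χ₀, hχ₀⟩ (fun _ p => ⟨(step p.1 p.2).choose, ((step p.1 p.2).choose_spec).1⟩) n
  have hdesc : ∀ n, G.prec (g (n + 1)).1 (g n).1 := fun n =>
    ((step (g n).1 (g n).2).choose_spec).2
  have hmemΦ : ∀ n, (g n).1 ∈ G.Φ := fun n => (g n).2.1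
  have hchain : ∀ i j, i < j → G.prec (g j).1 (g i).1 := by
    intro i j hij
    induction j with
    | zero => omega
    | succ k ih =>
      rcases Nat.lt_succ_iff_lt_or_eq.mp hij with h | rfl
      · exact G.trans _ (hmemΦ (k + 1)) _ (hmemΦ k) _ (hmemΦ i) (hdesc k) (ih h)
      · exact hdesc i
  have hinj : Function.Injective (fun n => (g n).1) := by
    intro i j hij
    have hij' : (g i).1 = (g j).1 := hij
    by_contra hne
    rcases lt_trichotomy i j with h | h | h
    · exact G.irrefl _ (hmemΦ i) (hij' ▸ hchain i j h)
    · exact hne h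
    · exact G.irrefl _ (hmemΦ j) (hij' ▸ hchain j i h)
  exact (Set.infinite_of_injective_forall_mem hinj hmemΦ) G.finite

/-- `G₁ ≡_φ G₂` iff some preference model whose set of worlds is exactly
the set of valuations satisfying `φ` is induced by both `G₁` and `G₂`. -/
theorem equivOn_iff_common_full_model {P : Type*} [Fintype P]
    (G₁ G₂ : PGraph P) (φ : Set (Val P)) :
    EquivOn φ G₁ G₂ ↔
      ∃ M : PrefModel P, M.W = φ ∧ InducedBy M G₁ ∧ InducedBy M G₂ := by
  constructor
  · intro h
    refine ⟨⟨φ, G₁.le, fun w _ => G₁.le_refl' w,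
      fun w _ w' _ w'' _ h1 h2 => G₁.le_trans'_s5 h1 h2⟩, rfl, ?_, ?_⟩
    · exact fun w _ w' _ => Iff.rfl
    · exact (h _ (subset_refl φ)).mp (fun w _ w' _ => Iff.rfl)
  · rintro ⟨M, hW, h1, h2⟩ N hN
    have key : ∀ w ∈ N.W, ∀ w' ∈ N.W, (G₁.le w w' ↔ G₂.le w w') := by
      intro w hw w' hw'
      have hwM : w ∈ M.W := hW ▸ hN hw
      have hw'M : w' ∈ M.W := hW ▸ hN hw'
      exact (h1 w hwM w' hw'M).symm.trans (h2 w hwM w' hw'M)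
    constructor
    · intro hi w hw w' hw'
      exact (hi w hw w' hw').trans (key w hw w' hw')
    · intro hi w hw w' hw'
      exact (hi w hw w' hw').trans (key w hw w' hw').symm
end
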